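/- arXiv:2110.07891 — 8 statements merged into one kernel-verified Lean document; each statement's English description precedes it below -/
import Mathlib

section
/- Let M ≥ 2 and 0 < M_s < M/2 be natural numbers. Define α = √M / √((M−M_s) + M_s^{1/3}(M−M_s)^{2/3}) and δ = −α·((M−M_s)/M_s)^{1/3}. Then the vector g ∈ ℝ^M with g_m = δ for m < M_s and g_m = α otherwise satisfies both constraints: ∑_m g_m^2 = M and ∑_m g_m^3 = 0. -/
/-! With a = M - Mₛ and c = (a / Mₛ)^{1/3}, the vector takes the value -α c on Mₛ coordinates and
α on the other a. Since Mₛ c³ = a, the cubes cancel: Mₛ (-α c)³ + a α³ = α³ (a - a) = 0. Since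
Mₛ c² = Mₛ^{1/3} a^{2/3}, the squares sum to α² (a + Mₛ^{1/3} a^{2/3}), which is M by the choice
of α. -/

open Finset in
theorem Fin.sum_univ_ite_val_lt {β : Type*} [AddCommMonoid β] {n k : ℕ} (hk : k ≤ n) (c d : β) :
    ∑ i : Fin n, (if (i : ℕ) < k then c else d) = k • c + (n - k) • d := by
  rw [sum_ite, Finset.sum_const, Finset.sum_const, filter_not,
    card_sdiff_of_subset (filter_subset _ _), card_univ, Fintype.card_fin, card_filter_val_lt,
    min_eq_right hk]

theorem Real.mul_div_rpow_two_thirds {a s : ℝ} (ha : 0 ≤ a) (hs : 0 < s) :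
    s * (a / s) ^ ((2 : ℝ) / 3) = s ^ ((1 : ℝ) / 3) * a ^ ((2 : ℝ) / 3) := by
  have hsplit : s ^ ((1 : ℝ) / 3) * s ^ ((2 : ℝ) / 3) = s := by
    rw [← Real.rpow_add hs]; norm_num
  rw [Real.div_rpow ha hs.le, mul_div_assoc', div_eq_iff (by positivity)]
  linear_combination -(a ^ ((2 : ℝ) / 3)) * hsplit

theorem Real.rpow_one_third_pow_three {x : ℝ} (hx : 0 ≤ x) : (x ^ ((1 : ℝ) / 3)) ^ 3 = x := by
  simpa using Real.rpow_inv_natCast_pow hx (n := 3) (by norm_num)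

theorem Real.rpow_one_third_sq {x : ℝ} (hx : 0 ≤ x) :
    (x ^ ((1 : ℝ) / 3)) ^ 2 = x ^ ((2 : ℝ) / 3) := by
  rw [← Real.rpow_natCast, ← Real.rpow_mul hx]; norm_num

theorem cube_sum_eq_zero_of_cbrt_ratio {a s : ℝ} (ha : 0 ≤ a) (hs : 0 < s) (α : ℝ) :
    s * (-α * (a / s) ^ ((1 : ℝ) / 3)) ^ 3 + a * α ^ 3 = 0 := by
  rw [mul_pow, Real.rpow_one_third_pow_three (div_nonneg ha hs.le)]
  field_simp
  ring

theorem square_sum_of_cbrt_ratio {a s : ℝ} (ha : 0 ≤ a) (hs : 0 < s) (α : ℝ) :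
    s * (-α * (a / s) ^ ((1 : ℝ) / 3)) ^ 2 + a * α ^ 2
      = α ^ 2 * (a + s ^ ((1 : ℝ) / 3) * a ^ ((2 : ℝ) / 3)) := by
  rw [← Real.mul_div_rpow_two_thirds ha hs, ← Real.rpow_one_third_sq (div_nonneg ha hs.le)]
  ring

theorem z3ro_satisfies_constraints_general (M Ms : ℕ) (hMs : 0 < Ms)
    (hMs2 : (Ms : ℝ) < (M : ℝ) / 2)
    (α δ : ℝ)
    (hα : α = Real.sqrt M /
      Real.sqrt (((M : ℝ) - Ms) + (Ms : ℝ) ^ ((1 : ℝ)/3) * ((M : ℝ) - Ms) ^ ((2 : ℝ)/3)))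
    (hδ : δ = -α * (((M : ℝ) - Ms) / Ms) ^ ((1 : ℝ)/3))
    (g : Fin M → ℝ) (hg : ∀ m : Fin M, g m = if (m : ℕ) < Ms then δ else α) :
    (∑ m, (g m) ^ 2 = M) ∧ (∑ m, (g m) ^ 3 = 0) := by
  have hs : (0 : ℝ) < Ms := by exact_mod_cast hMs
  have ha : (0 : ℝ) < M - Ms := by linarith
  have hle : Ms ≤ M := by exact_mod_cast (by linarith : (Ms : ℝ) ≤ M)
  have hα2 : α ^ 2 * (((M : ℝ) - Ms) + (Ms : ℝ) ^ ((1 : ℝ)/3) * ((M : ℝ) - Ms) ^ ((2 : ℝ)/3))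
      = M := by
    rw [hα, div_pow, Real.sq_sqrt (Nat.cast_nonneg M), Real.sq_sqrt (by positivity)]
    field_simp
  have hsum (p : ℕ) : ∑ m, g m ^ p = Ms * δ ^ p + ((M : ℝ) - Ms) * α ^ p := by
    simp only [hg, apply_ite (· ^ p)]
    rw [Fin.sum_univ_ite_val_lt hle, nsmul_eq_mul, nsmul_eq_mul, Nat.cast_sub hle]
  rw [hsum, hsum, hδ, square_sum_of_cbrt_ratio ha.le hs, hα2,
    cube_sum_eq_zero_of_cbrt_ratio ha.le hs]
  exact ⟨rfl, rfl⟩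

theorem z3ro_satisfies_constraints (M Ms : ℕ) (hM : 2 ≤ M) (hMs : 0 < Ms)
    (hMs2 : (Ms : ℝ) < (M : ℝ) / 2)
    (α δ : ℝ)
    (hα : α = Real.sqrt M /
      Real.sqrt (((M : ℝ) - Ms) + (Ms : ℝ) ^ ((1 : ℝ)/3) * ((M : ℝ) - Ms) ^ ((2 : ℝ)/3)))
    (hδ : δ = -α * (((M : ℝ) - Ms) / Ms) ^ ((1 : ℝ)/3))
    (g : Fin M → ℝ) (hg : ∀ m : Fin M, g m = if (m : ℕ) < Ms then δ else α) :
    (∑ m, (g m) ^ 2 = M) ∧ (∑ m, (g m) ^ 3 = 0) :=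
  z3ro_satisfies_constraints_general M Ms hMs hMs2 α δ hα hδ g hg
end

section
/- With g as in the Z3RO design (M_s entries equal to δ = −α((M−M_s)/M_s)^{1/3} and M−M_s entries equal to α = √M/√((M−M_s)+M_s^{1/3}(M−M_s)^{2/3})), the squared sum satisfies (∑_{m=0}^{M−1} g_m)^2 = M·((M−M_s)^{2/3} − M_s^{2/3})^2 / ((M−M_s)^{1/3} + M_s^{1/3}). -/
theorem z3ro_array_gain (M Ms : ℕ) (hM : 2 ≤ M) (hMs : 0 < Ms)
    (hMs2 : (Ms : ℝ) < (M : ℝ) / 2)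
    (α δ : ℝ)
    (hα : α = Real.sqrt M /
      Real.sqrt (((M : ℝ) - Ms) + (Ms : ℝ) ^ ((1 : ℝ)/3) * ((M : ℝ) - Ms) ^ ((2 : ℝ)/3)))
    (hδ : δ = -α * (((M : ℝ) - Ms) / Ms) ^ ((1 : ℝ)/3))
    (g : Fin M → ℝ) (hg : ∀ m : Fin M, g m = if (m : ℕ) < Ms then δ else α) :
    (∑ m, g m) ^ 2 =
      M * (((M : ℝ) - Ms) ^ ((2 : ℝ)/3) - (Ms : ℝ) ^ ((2 : ℝ)/3)) ^ 2 /
        (((M : ℝ) - Ms) ^ ((1 : ℝ)/3) + (Ms : ℝ) ^ ((1 : ℝ)/3)) := by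
  have hMR : (Ms : ℝ) < (M : ℝ) :=
    lt_of_lt_of_le hMs2 (half_le_self (by positivity))
  have hMsM : Ms < M := by exact_mod_cast hMR
  set a : ℝ := (M : ℝ) - Ms with ha_def
  have ha : 0 < a := by simp [ha_def]; linarith
  have hb : 0 < (Ms : ℝ) := by exact_mod_cast hMs
  set x : ℝ := a ^ ((1 : ℝ)/3) with hx_def
  set y : ℝ := (Ms : ℝ) ^ ((1 : ℝ)/3) with hy_def
  have hx : 0 < x := Real.rpow_pos_of_pos ha _
  have hy : 0 < y := Real.rpow_pos_of_pos hb _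
  have hx3 : x ^ 3 = a := by
    rw [hx_def, ← Real.rpow_natCast (a ^ ((1:ℝ)/3)) 3, ← Real.rpow_mul ha.le]
    norm_num
  have hy3 : y ^ 3 = (Ms : ℝ) := by
    rw [hy_def, ← Real.rpow_natCast ((Ms:ℝ) ^ ((1:ℝ)/3)) 3, ← Real.rpow_mul hb.le]
    norm_num
  have hx2 : a ^ ((2 : ℝ)/3) = x ^ 2 := by
    rw [hx_def, ← Real.rpow_natCast (a ^ ((1:ℝ)/3)) 2, ← Real.rpow_mul ha.le]
    norm_num
  have hy2 : (Ms : ℝ) ^ ((2 : ℝ)/3) = y ^ 2 := by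
    rw [hy_def, ← Real.rpow_natCast ((Ms:ℝ) ^ ((1:ℝ)/3)) 2, ← Real.rpow_mul hb.le]
    norm_num
  have hdiv : (a / (Ms : ℝ)) ^ ((1 : ℝ)/3) = x / y :=
    Real.div_rpow ha.le hb.le _
  -- compute the sum
  have hsum : (∑ m, g m) = (Ms : ℝ) * δ + a * α := by
    have : (∑ m, g m) = ∑ m ∈ Finset.range M, (if m < Ms then δ else α) := by
      rw [← Fin.sum_univ_eq_sum_range (fun m => if m < Ms then δ else α)]
      exact Finset.sum_congr rfl fun m _ => hg m
    rw [this, Finset.range_eq_Ico, ← Finset.sum_Ico_consecutive _ (Nat.zero_le Ms) hMsM.le,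
      Finset.sum_congr rfl (fun m hm => if_pos (Finset.mem_Ico.mp hm).2),
      Finset.sum_congr rfl (fun m hm => if_neg (not_lt.mpr (Finset.mem_Ico.mp hm).1))]
    simp [Nat.card_Ico, Nat.cast_sub hMsM.le, ha_def]
  -- rewrite δ and α
  have hδ' : δ = -α * (x / y) := by rw [hδ, hdiv]
  have hsum3 : (∑ m, g m) = α * x * (x ^ 2 - y ^ 2) := by
    rw [hsum, hδ', ← hy3, ← hx3]
    have hy0 : y ≠ 0 := ne_of_gt hy
    field_simp
    ring
  -- α squared
  have hden : a + (Ms : ℝ) ^ ((1:ℝ)/3) * a ^ ((2:ℝ)/3) = x ^ 2 * (x + y) := by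
    rw [hx2, ← hy_def, ← hx3]; ring
  have hdenpos : (0:ℝ) < x ^ 2 * (x + y) := by positivity
  have hα2 : α ^ 2 = (M : ℝ) / (x ^ 2 * (x + y)) := by
    rw [hα, hden, div_pow, Real.sq_sqrt (by positivity), Real.sq_sqrt hdenpos.le]
  rw [hsum3, hx2, hy2, mul_pow, mul_pow, hα2]
  have hxy : x + y ≠ 0 := by positivity
  field_simp
end

section
/- The function f(x) = (x^{2/3} − (1−x)^{2/3})^2 / (x^{1/3} + (1−x)^{1/3}) is strictly monotonically decreasing on the open interval (0, 1/2). -/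
private lemma cube_rt (x : ℝ) (hx : 0 ≤ x) : (x ^ ((1:ℝ)/3)) ^ 3 = x := by
  rw [← Real.rpow_natCast (x ^ ((1:ℝ)/3)) 3, ← Real.rpow_mul hx]
  norm_num

private lemma two_thirds (x : ℝ) (hx : 0 ≤ x) : x ^ ((2:ℝ)/3) = (x ^ ((1:ℝ)/3)) ^ 2 := by
  rw [← Real.rpow_natCast (x ^ ((1:ℝ)/3)) 2, ← Real.rpow_mul hx]
  norm_num

private lemma key_eq (x : ℝ) (hx : 0 < x) (hx1 : x < 1) :
    (x ^ ((2 : ℝ)/3) - (1 - x) ^ ((2 : ℝ)/3)) ^ 2 /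
        (x ^ ((1 : ℝ)/3) + (1 - x) ^ ((1 : ℝ)/3))
      = (4 - (x ^ ((1:ℝ)/3) + (1 - x) ^ ((1:ℝ)/3)) ^ 3) / 3 := by
  have hx1' : (0:ℝ) < 1 - x := by linarith
  set a := x ^ ((1:ℝ)/3) with ha_def
  set b := (1 - x) ^ ((1:ℝ)/3) with hb_def
  have ha : 0 < a := Real.rpow_pos_of_pos hx _
  have hb : 0 < b := Real.rpow_pos_of_pos hx1' _
  have ha3 : a ^ 3 = x := cube_rt x hx.le
  have hb3 : b ^ 3 = 1 - x := cube_rt (1 - x) hx1'.le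
  have hsum : a ^ 3 + b ^ 3 = 1 := by rw [ha3, hb3]; ring
  rw [two_thirds x hx.le, two_thirds (1 - x) hx1'.le]
  rw [div_eq_div_iff (by positivity) (by norm_num)]
  linear_combination (4 * (a + b)) * hsum

private lemma s_lt (x y : ℝ) (hx : 0 < x) (hxy : x < y) (hy : y < 1/2) :
    x ^ ((1:ℝ)/3) + (1 - x) ^ ((1:ℝ)/3) < y ^ ((1:ℝ)/3) + (1 - y) ^ ((1:ℝ)/3) := by
  set p := x ^ ((1:ℝ)/3) with hp_def
  set q := y ^ ((1:ℝ)/3) with hq_def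
  set r := (1 - y) ^ ((1:ℝ)/3) with hr_def
  set t := (1 - x) ^ ((1:ℝ)/3) with ht_def
  have hy1 : (0:ℝ) < 1 - y := by linarith
  have hx1 : (0:ℝ) < 1 - x := by linarith
  have hp : 0 < p := Real.rpow_pos_of_pos hx _
  have hpq : p < q := Real.rpow_lt_rpow hx.le hxy (by norm_num)
  have hqr : q < r := Real.rpow_lt_rpow (by linarith) (by linarith) (by norm_num)
  have hrt : r < t := Real.rpow_lt_rpow hy1.le (by linarith) (by norm_num)
  have hp3 : p ^ 3 = x := cube_rt x hx.le
  have hq3 : q ^ 3 = y := cube_rt y (by linarith)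
  have hr3 : r ^ 3 = 1 - y := cube_rt (1 - y) hy1.le
  have ht3 : t ^ 3 = 1 - x := cube_rt (1 - x) hx1.le
  have hq : 0 < q := hp.trans hpq
  have hd : (q - p) * (q^2 + q*p + p^2) = (t - r) * (t^2 + t*r + r^2) := by
    have : q ^ 3 - p ^ 3 = t ^ 3 - r ^ 3 := by rw [hp3, hq3, hr3, ht3]; ring
    linear_combination this
  have hden : q^2 + q*p + p^2 < t^2 + t*r + r^2 := by nlinarith
  have h1 : (t - r) * (q^2 + q*p + p^2) < (t - r) * (t^2 + t*r + r^2) :=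
    mul_lt_mul_of_pos_left hden (sub_pos.mpr hrt)
  have h2 : (t - r) * (q^2 + q*p + p^2) < (q - p) * (q^2 + q*p + p^2) := by
    rw [hd]; exact h1
  have h3 : t - r < q - p :=
    lt_of_mul_lt_mul_right h2 (by positivity : (0:ℝ) ≤ q^2 + q*p + p^2)
  linarith

theorem z3ro_normalized_gain_strictAnti :
    StrictAntiOn
      (fun x : ℝ =>
        (x ^ ((2 : ℝ)/3) - (1 - x) ^ ((2 : ℝ)/3)) ^ 2 /
          (x ^ ((1 : ℝ)/3) + (1 - x) ^ ((1 : ℝ)/3)))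
      (Set.Ioo 0 (1/2)) := by
  intro x hx y hy hxy
  obtain ⟨hx0, hx2⟩ := hx
  obtain ⟨hy0, hy2⟩ := hy
  simp only
  rw [key_eq x hx0 (by linarith), key_eq y hy0 (by linarith)]
  have hs := s_lt x y hx0 hxy hy2
  have hsx : 0 < x ^ ((1:ℝ)/3) + (1 - x) ^ ((1:ℝ)/3) := by
    have := Real.rpow_pos_of_pos hx0 ((1:ℝ)/3)
    have := Real.rpow_pos_of_pos (show (0:ℝ) < 1 - x by linarith) ((1:ℝ)/3)
    linarith
  have h3 : (x ^ ((1:ℝ)/3) + (1 - x) ^ ((1:ℝ)/3)) ^ 3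
      < (y ^ ((1:ℝ)/3) + (1 - y) ^ ((1:ℝ)/3)) ^ 3 := by
    exact pow_lt_pow_left₀ hs hsx.le (by norm_num)
  linarith
end

section
/- Among all integers M_s with 1 ≤ M_s < M/2, the quantity G(M_s) = M·((M−M_s)^{2/3} − M_s^{2/3})^2 / ((M−M_s)^{1/3} + M_s^{1/3}) is maximized at M_s = 1. -/
set_option maxHeartbeats 800000

private lemma cube_rt_cube {t : ℝ} (ht : 0 ≤ t) : (t ^ ((1:ℝ)/3)) ^ 3 = t := by
  rw [← Real.rpow_natCast (t ^ ((1:ℝ)/3)) 3, ← Real.rpow_mul ht]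
  norm_num

private lemma two_thirds_sq {t : ℝ} (ht : 0 ≤ t) : t ^ ((2:ℝ)/3) = (t ^ ((1:ℝ)/3)) ^ 2 := by
  rw [← Real.rpow_natCast (t ^ ((1:ℝ)/3)) 2, ← Real.rpow_mul ht]
  norm_num

private lemma one_le_cube_rt {t : ℝ} (ht : 1 ≤ t) : 1 ≤ t ^ ((1:ℝ)/3) := by
  have h := Real.rpow_le_rpow zero_le_one ht (by norm_num : (0:ℝ) ≤ (1:ℝ)/3)
  rwa [Real.one_rpow] at h

theorem z3ro_gain_maximized_at_one (M : ℕ) (hM : 3 ≤ M)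
    (G : ℕ → ℝ)
    (hG : ∀ Ms : ℕ, G Ms =
      M * (((M : ℝ) - Ms) ^ ((2 : ℝ)/3) - (Ms : ℝ) ^ ((2 : ℝ)/3)) ^ 2 /
        (((M : ℝ) - Ms) ^ ((1 : ℝ)/3) + (Ms : ℝ) ^ ((1 : ℝ)/3))) :
    ∀ Ms : ℕ, 1 ≤ Ms → (Ms : ℝ) < (M : ℝ) / 2 → G Ms ≤ G 1 := by
  intro Ms h1 h2
  have hM' : (3:ℝ) ≤ (M:ℝ) := by exact_mod_cast hM
  have hx1 : (1:ℝ) ≤ (Ms:ℝ) := by exact_mod_cast h1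
  set x : ℝ := (Ms : ℝ) with hxdef
  have hMx0 : (0:ℝ) ≤ (M:ℝ) - x := by linarith
  have hM10 : (0:ℝ) ≤ (M:ℝ) - 1 := by linarith
  have hx0 : (0:ℝ) ≤ x := by linarith
  set a : ℝ := ((M:ℝ) - x) ^ ((1:ℝ)/3) with hadef
  set b : ℝ := x ^ ((1:ℝ)/3) with hbdef
  set c : ℝ := ((M:ℝ) - 1) ^ ((1:ℝ)/3) with hcdef
  have ha3 : a ^ 3 = (M:ℝ) - x := cube_rt_cube hMx0
  have hb3 : b ^ 3 = x := cube_rt_cube hx0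
  have hc3 : c ^ 3 = (M:ℝ) - 1 := cube_rt_cube hM10
  have ha1 : (1:ℝ) ≤ a := one_le_cube_rt (by linarith)
  have hb1 : (1:ℝ) ≤ b := one_le_cube_rt hx1
  have hc1 : (1:ℝ) ≤ c := one_le_cube_rt (by linarith)
  have hba : b ≤ a := Real.rpow_le_rpow hx0 (by linarith) (by norm_num)
  have hac : a ≤ c := Real.rpow_le_rpow hMx0 (by linarith) (by norm_num)
  -- c + 1 ≤ a + b
  have e1 : (b - 1) * (b^2 + b + 1) = x - 1 := by linear_combination hb3
  have e2 : (c - a) * (c^2 + c*a + a^2) = x - 1 := by linear_combination hc3 - ha3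
  have hd : b^2 + b + 1 ≤ c^2 + c*a + a^2 := by nlinarith
  have hsum : c + 1 ≤ a + b := by nlinarith [e1, e2, hd, hb1, ha1, hc1]
  -- c ≤ a * b
  have hab0 : (0:ℝ) ≤ a * b := by positivity
  have hprod : c ≤ a * b := by
    have hcube : c ^ 3 ≤ (a * b) ^ 3 := by
      have hmp : (a * b) ^ 3 = ((M:ℝ) - x) * x := by rw [mul_pow, ha3, hb3]
      rw [hmp, hc3]
      nlinarith [hx1, h2, hM']
    exact le_of_pow_le_pow_left₀ (by norm_num) hab0 hcube
  -- rewrite G values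
  have hab_pos : (0:ℝ) < a + b := by linarith
  have hc1_pos : (0:ℝ) < c + 1 := by linarith
  have hGMs : G Ms = (M:ℝ) * ((M:ℝ) - a * b * (a + b)) := by
    rw [hG Ms, ← hxdef, two_thirds_sq hMx0, two_thirds_sq hx0, ← hadef, ← hbdef,
      div_eq_iff hab_pos.ne']
    linear_combination ((a+b)*(a^3+b^3+(M:ℝ)) - (a^2-b^2)^2 - a*b*(a+b)^2) * (ha3 + hb3)
  have hG1 : G 1 = (M:ℝ) * ((M:ℝ) - c * (c + 1)) := by
    have h := hG 1
    simp only [Nat.cast_one, Real.one_rpow] at h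
    rw [h, two_thirds_sq hM10, ← hcdef, div_eq_iff hc1_pos.ne']
    linear_combination ((c+1)*(c^3+1+(M:ℝ)) - (c^2-1)^2 - c*(c+1)^2) * hc3
  rw [hGMs, hG1]
  have hkey : c * (c + 1) ≤ a * b * (a + b) :=
    mul_le_mul hprod hsum (by linarith) hab0
  exact mul_le_mul_of_nonneg_left (by linarith) (by linarith)
end

section
/- Let h ∈ ℂ^M be a channel vector with h_m ≠ 0 for all m, and let 1 ≤ M_s < M. Define γ = (∑_{m'=M_s}^{M−1} |h_{m'}|^4 / ∑_{m''=0}^{M_s−1} |h_{m''}|^4)^{1/3} and set w_m = −γ·conj(h_m) for m < M_s and w_m = conj(h_m) for m ≥ M_s (up to an arbitrary positive normalization α). Then the zero third-order distortion constraint ∑_{m=0}^{M−1} h_m w_m |w_m|^2 = 0 holds. -/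
/-!
Each antenna transmits a real multiple `c m` of the conjugate channel, so its contribution
`h w |w|²` to the third-order term is the real number `c³ |h|⁴`. The gain `-αγ` on the first
`Ms` antennas and `α` on the rest make the total `α³ (S₂ - γ³ S₁)`, where `S₁`, `S₂` are the
sums of `|h|⁴` over the two groups, and `γ³ = S₂ / S₁` is exactly the choice of `γ`.
-/

open ComplexConjugate Finset

lemma mul_ofReal_mul_conj_mul_norm_sq (z : ℂ) (c : ℝ) :
    z * (c * conj z) * ((‖(c : ℂ) * conj z‖ : ℝ) : ℂ) ^ 2 = ((c ^ 3 * ‖z‖ ^ 4 : ℝ) : ℂ) := by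
  rw [norm_mul, Complex.norm_real, Complex.norm_conj, Real.norm_eq_abs]
  push_cast
  rw [mul_pow, ← Complex.ofReal_pow, sq_abs]
  push_cast
  linear_combination (c : ℂ) ^ 3 * (‖z‖ : ℂ) ^ 2 * Complex.mul_conj' z

lemma rpow_one_third_pow_three_mul {a b : ℝ} (ha : 0 ≤ a) (hb : 0 < b) :
    ((a / b) ^ ((1 : ℝ) / 3)) ^ 3 * b = a := by
  rw [one_div, ← Nat.cast_ofNat, Real.rpow_inv_natCast_pow (div_nonneg ha hb.le) three_ne_zero,
    div_mul_cancel₀ a hb.ne']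

theorem z3ro_general_channel_zero_distortion_general (M Ms : ℕ) (hMs : 1 ≤ Ms) (hMsM : Ms < M)
    (h : ℕ → ℂ) (hne : ∀ m, h m ≠ 0)
    (γ : ℝ)
    (hγ : γ = ((∑ m' ∈ Finset.Ico Ms M, (‖h m'‖) ^ 4) /
               (∑ m'' ∈ Finset.range Ms, (‖h m''‖) ^ 4)) ^ ((1 : ℝ)/3))
    (α : ℝ)
    (w : ℕ → ℂ)
    (hw : ∀ m, w m = if m < Ms then (α : ℂ) * (-(γ : ℂ)) * (starRingEnd ℂ) (h m)
                     else (α : ℂ) * (starRingEnd ℂ) (h m)) :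
    ∑ m ∈ Finset.range M, h m * w m * (((‖w m‖ : ℝ) : ℂ)) ^ 2 = 0 := by
  set c : ℕ → ℝ := fun m ↦ if m < Ms then α * -γ else α
  have hwc : ∀ m, w m = c m * conj (h m) := fun m ↦ by
    rw [hw m]; split_ifs with hm <;> simp [c, hm]
  have hS₁ : 0 < ∑ m ∈ range Ms, ‖h m‖ ^ 4 :=
    sum_pos (fun m _ ↦ pow_pos (norm_pos_iff.mpr (hne m)) 4) (nonempty_range_iff.mpr (by omega))
  have hγ₃ : γ ^ 3 * ∑ m ∈ range Ms, ‖h m‖ ^ 4 = ∑ m ∈ Ico Ms M, ‖h m‖ ^ 4 :=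
    hγ ▸ rpow_one_third_pow_three_mul (sum_nonneg fun m _ ↦ by positivity) hS₁
  simp only [hwc, mul_ofReal_mul_conj_mul_norm_sq, ← Complex.ofReal_sum, Complex.ofReal_eq_zero]
  have h_head :
      ∑ m ∈ range Ms, c m ^ 3 * ‖h m‖ ^ 4 = (α * -γ) ^ 3 * ∑ m ∈ range Ms, ‖h m‖ ^ 4 := by
    rw [mul_sum]
    exact sum_congr rfl fun m hm ↦ by simp only [c, if_pos (mem_range.mp hm)]
  have h_tail : ∑ m ∈ Ico Ms M, c m ^ 3 * ‖h m‖ ^ 4 = α ^ 3 * ∑ m ∈ Ico Ms M, ‖h m‖ ^ 4 := by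
    rw [mul_sum]
    exact sum_congr rfl fun m hm ↦ by simp only [c, if_neg (mem_Ico.mp hm).1.not_gt]
  rw [← sum_range_add_sum_Ico _ hMsM.le, h_head, h_tail]
  linear_combination -α ^ 3 * hγ₃

theorem z3ro_general_channel_zero_distortion (M Ms : ℕ) (hMs : 1 ≤ Ms) (hMsM : Ms < M)
    (h : ℕ → ℂ) (hne : ∀ m, h m ≠ 0)
    (γ : ℝ)
    (hγ : γ = ((∑ m' ∈ Finset.Ico Ms M, (‖h m'‖) ^ 4) /
               (∑ m'' ∈ Finset.range Ms, (‖h m''‖) ^ 4)) ^ ((1 : ℝ)/3))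
    (α : ℝ) (hα : 0 < α)
    (w : ℕ → ℂ)
    (hw : ∀ m, w m = if m < Ms then (α : ℂ) * (-(γ : ℂ)) * (starRingEnd ℂ) (h m)
                     else (α : ℂ) * (starRingEnd ℂ) (h m)) :
    ∑ m ∈ Finset.range M, h m * w m * (((‖w m‖ : ℝ) : ℂ)) ^ 2 = 0 :=
  z3ro_general_channel_zero_distortion_general M Ms hMs hMsM h hne γ hγ α w hw
end

section
/- For the Z3RO precoder g with M_s entries equal to δ = −α((M−M_s)/M_s)^{1/3} and M−M_s entries equal to α (with α as in the power normalization), the sum S = ∑_m g_m satisfies S = α(M−M_s) + δ M_s = α[(M−M_s) − M_s^{2/3}(M−M_s)^{1/3}], and S > 0 whenever M_s < M/2. -/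
theorem z3ro_positive_sum (M Ms : ℕ) (hM : 2 ≤ M) (hMs : 1 ≤ Ms)
    (hMs2 : (Ms : ℝ) < (M : ℝ) / 2)
    (α δ : ℝ)
    (hα : α = Real.sqrt M /
      Real.sqrt (((M : ℝ) - Ms) + (Ms : ℝ) ^ ((1 : ℝ)/3) * ((M : ℝ) - Ms) ^ ((2 : ℝ)/3)))
    (hδ : δ = -α * (((M : ℝ) - Ms) / Ms) ^ ((1 : ℝ)/3))
    (g : Fin M → ℝ) (hg : ∀ m : Fin M, g m = if (m : ℕ) < Ms then δ else α) :
    (∑ m, g m = α * ((M : ℝ) - Ms) + δ * Ms) ∧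
    (∑ m, g m = α * (((M : ℝ) - Ms) - (Ms : ℝ) ^ ((2 : ℝ)/3) * ((M : ℝ) - Ms) ^ ((1 : ℝ)/3))) ∧
    0 < ∑ m, g m := by
  have hMsR : (0:ℝ) < Ms := by exact_mod_cast hMs
  have hMlt : (Ms:ℝ) < (M:ℝ) - Ms := by linarith
  have ha : (0:ℝ) < (M:ℝ) - Ms := lt_trans hMsR hMlt
  have hMsM : Ms ≤ M := by
    have : (Ms:ℝ) < (M:ℝ) := by linarith
    exact_mod_cast this.le
  -- sum computation
  have hsum : ∑ m, g m = α * ((M : ℝ) - Ms) + δ * Ms := by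
    have : ∑ m, g m = ∑ i ∈ Finset.range M, (if i < Ms then δ else α) := by
      rw [← Fin.sum_univ_eq_sum_range]
      exact Finset.sum_congr rfl fun m _ => hg m
    rw [this, Finset.sum_ite]
    have hfilter : (Finset.range M).filter (· < Ms) = Finset.range Ms := by
      ext i
      simp only [Finset.mem_filter, Finset.mem_range]
      constructor
      · rintro ⟨_, h⟩; exact h
      · intro h; exact ⟨lt_of_lt_of_le h hMsM, h⟩
    rw [hfilter]
    have hcard : ((Finset.range M).filter (fun i => ¬ i < Ms)).card = M - Ms := by
      have := Finset.card_filter_add_card_filter_not (s := Finset.range M)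
        (p := fun i => i < Ms)
      simp only [hfilter, Finset.card_range] at this
      omega
    simp only [Finset.sum_const, hcard, Finset.card_range, nsmul_eq_mul]
    have : ((M - Ms : ℕ) : ℝ) = (M:ℝ) - Ms := by
      push_cast [Nat.cast_sub hMsM]; ring
    rw [this]; ring
  -- the key rpow identity: δ * Ms = -α * (Ms^{2/3} * (M-Ms)^{1/3})
  have hδMs : δ * Ms = -(α * ((Ms:ℝ) ^ ((2:ℝ)/3) * ((M:ℝ) - Ms) ^ ((1:ℝ)/3))) := by
    rw [hδ, Real.div_rpow ha.le hMsR.le]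
    have hMs1 : (Ms:ℝ) = (Ms:ℝ) ^ ((2:ℝ)/3) * (Ms:ℝ) ^ ((1:ℝ)/3) := by
      rw [← Real.rpow_add hMsR]
      norm_num
    field_simp
    linear_combination (-α) * hMs1
  have hsum2 : ∑ m, g m = α * (((M : ℝ) - Ms) - (Ms : ℝ) ^ ((2 : ℝ)/3) * ((M : ℝ) - Ms) ^ ((1 : ℝ)/3)) := by
    rw [hsum, hδMs]; ring
  refine ⟨hsum, hsum2, ?_⟩
  rw [hsum2]
  have hαpos : 0 < α := by
    rw [hα]
    apply div_pos
    · apply Real.sqrt_pos.mpr; positivity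
    · apply Real.sqrt_pos.mpr
      have := Real.rpow_pos_of_pos hMsR ((1:ℝ)/3)
      have := Real.rpow_pos_of_pos ha ((2:ℝ)/3)
      positivity
  apply mul_pos hαpos
  have key : (Ms : ℝ) ^ ((2:ℝ)/3) * ((M:ℝ) - Ms) ^ ((1:ℝ)/3) <
      ((M:ℝ) - Ms) ^ ((2:ℝ)/3) * ((M:ℝ) - Ms) ^ ((1:ℝ)/3) := by
    apply mul_lt_mul_of_pos_right _ (Real.rpow_pos_of_pos ha _)
    exact Real.rpow_lt_rpow hMsR.le hMlt (by norm_num)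
  have : ((M:ℝ) - Ms) ^ ((2:ℝ)/3) * ((M:ℝ) - Ms) ^ ((1:ℝ)/3) = (M:ℝ) - Ms := by
    rw [← Real.rpow_add ha]; norm_num
  linarith
end

section
/- For the MRT precoder w_m = α·conj(h_m) with α = √(M/∑|h_{m'}|²) and PA output y_m = x_m + a₃x_m|x_m|² where x_m = w_m s, the received signal ∑_m h_m y_m equals s·α·∑_m |h_m|² + a₃·s|s|²·α³·∑_m |h_m|⁴. In the pure LOS case h_m = √β e^{−iφ_m}, this simplifies to √β·M·(s + a₃ s|s|²). -/
/-!
Under MRT, antenna `m` transmits `x = α conj(h) s`, so the PA output `x + a₃ x |x|²` reaches the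
user through `h` as `α |h|² s + a₃ α³ |h|⁴ s |s|²`: the conjugate precoder cancels the channel
phase in the distortion term as well, so both terms add up in phase over the array. For a pure
LOS channel every `|h_m|²` equals `β`, hence `α = 1/√β` and both sums equal `√β M`.
-/

open Finset ComplexConjugate

noncomputable def cubicPA (a3 x : ℂ) : ℂ := x + a3 * x * (‖x‖ : ℂ) ^ 2

lemma mul_cubicPA_mrt (a3 s h : ℂ) (α : ℝ) :
    h * cubicPA a3 (α * conj h * s)
      = s * α * (‖h‖ : ℂ) ^ 2 + a3 * s * (‖s‖ : ℂ) ^ 2 * (α : ℂ) ^ 3 * (‖h‖ : ℂ) ^ 4 := by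
  have hh : h * conj h = (‖h‖ : ℂ) ^ 2 := RCLike.mul_conj h
  have hα : ((|α| : ℝ) : ℂ) ^ 2 = (α : ℂ) ^ 2 := by exact_mod_cast sq_abs α
  simp only [cubicPA, norm_mul, Complex.norm_real, Complex.norm_conj, Real.norm_eq_abs,
    Complex.ofReal_mul, mul_pow, hα]
  linear_combination (s * α + a3 * s * (‖s‖ : ℂ) ^ 2 * α ^ 3 * (‖h‖ : ℂ) ^ 2) * hh

lemma norm_los_channel (β φ : ℝ) :
    ‖(Real.sqrt β : ℂ) * Complex.exp (-(Complex.I * φ))‖ = Real.sqrt β := by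
  rw [norm_mul, Complex.norm_real, Real.norm_of_nonneg (Real.sqrt_nonneg β), Complex.norm_exp]
  simp

lemma mrt_scale_los {M : ℕ} (hM : M ≠ 0) {β : ℝ} (hβ : 0 ≤ β) :
    Real.sqrt ((M : ℝ) / ∑ _m : Fin M, Real.sqrt β ^ 2) = (Real.sqrt β)⁻¹ := by
  rw [sum_const, card_univ, Fintype.card_fin, nsmul_eq_mul, Real.sq_sqrt hβ,
    div_mul_cancel_left₀ (Nat.cast_ne_zero.mpr hM), Real.sqrt_inv]

theorem mrt_coherent_distortion_general (M : ℕ) (h : Fin M → ℂ) (s a3 : ℂ)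
    (α : ℝ) (hα : α = Real.sqrt ((M : ℝ) / ∑ m', ‖h m'‖ ^ 2))
    (w x y : Fin M → ℂ)
    (hw : ∀ m, w m = (α : ℂ) * (starRingEnd ℂ) (h m))
    (hx : ∀ m, x m = w m * s)
    (hy : ∀ m, y m = x m + a3 * x m * ((‖x m‖ : ℂ)) ^ 2) :
    (∑ m, h m * y m
      = s * (α : ℂ) * (↑(∑ m, ‖h m‖ ^ 2) : ℂ)
        + a3 * s * ((‖s‖ : ℂ)) ^ 2 * (α : ℂ) ^ 3 *
            (↑(∑ m, ‖h m‖ ^ 4) : ℂ)) ∧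
    (∀ β : ℝ, 0 < β → ∀ φ : Fin M → ℝ,
      (∀ m, h m = (Real.sqrt β : ℂ) * Complex.exp (-(Complex.I * φ m))) →
      ∑ m, h m * y m
        = (Real.sqrt β : ℂ) * (M : ℂ) * (s + a3 * s * ((‖s‖ : ℂ)) ^ 2)) := by
  have hy_pa : ∀ m, y m = cubicPA a3 (α * conj (h m) * s) := fun m => by
    rw [hy, hx, hw, cubicPA]
  have received : ∑ m, h m * y m = s * (α : ℂ) * (↑(∑ m, ‖h m‖ ^ 2) : ℂ)
      + a3 * s * ((‖s‖ : ℂ)) ^ 2 * (α : ℂ) ^ 3 * (↑(∑ m, ‖h m‖ ^ 4) : ℂ) := by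
    simp only [hy_pa, mul_cubicPA_mrt, Complex.ofReal_sum, Complex.ofReal_pow, mul_sum,
      sum_add_distrib]
  refine ⟨received, fun β hβ φ hlos => ?_⟩
  rcases eq_or_ne M 0 with rfl | hM
  · simp
  have hnorm : ∀ m, ‖h m‖ = Real.sqrt β := fun m => by rw [hlos]; exact norm_los_channel β (φ m)
  have hscale : α = (Real.sqrt β)⁻¹ := by
    simp only [hα, hnorm]
    exact mrt_scale_los hM hβ.le
  have hsqrt : (Real.sqrt β : ℂ) ≠ 0 := by exact_mod_cast (Real.sqrt_pos.mpr hβ).ne'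
  rw [received, hscale]
  simp only [hnorm, sum_const, card_univ, Fintype.card_fin, nsmul_eq_mul]
  push_cast
  field_simp

theorem mrt_coherent_distortion (M : ℕ) (h : Fin M → ℂ) (s a3 : ℂ)
    (hpos : 0 < ∑ m, ‖h m‖ ^ 2)
    (α : ℝ) (hα : α = Real.sqrt ((M : ℝ) / ∑ m', ‖h m'‖ ^ 2))
    (w x y : Fin M → ℂ)
    (hw : ∀ m, w m = (α : ℂ) * (starRingEnd ℂ) (h m))
    (hx : ∀ m, x m = w m * s)
    (hy : ∀ m, y m = x m + a3 * x m * ((‖x m‖ : ℂ)) ^ 2) :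
    (∑ m, h m * y m
      = s * (α : ℂ) * (↑(∑ m, ‖h m‖ ^ 2) : ℂ)
        + a3 * s * ((‖s‖ : ℂ)) ^ 2 * (α : ℂ) ^ 3 *
            (↑(∑ m, ‖h m‖ ^ 4) : ℂ)) ∧
    (∀ β : ℝ, 0 < β → ∀ φ : Fin M → ℝ,
      (∀ m, h m = (Real.sqrt β : ℂ) * Complex.exp (-(Complex.I * φ m))) →
      ∑ m, h m * y m
        = (Real.sqrt β : ℂ) * (M : ℂ) * (s + a3 * s * ((‖s‖ : ℂ)) ^ 2)) :=
  mrt_coherent_distortion_general M h s a3 α hα w x y hw hx hy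
end

section
/- For x ∈ (0, 1/2), the function f(x) = (x^{2/3} − (1−x)^{2/3})² / (x^{1/3} + (1−x)^{1/3}) satisfies f(x) < 1 and lim_{x→0⁺} f(x) = 1. -/
theorem z3ro_normalized_gain_lt_one
    (f : ℝ → ℝ)
    (hf : ∀ x : ℝ, f x = (x ^ ((2 : ℝ)/3) - (1 - x) ^ ((2 : ℝ)/3)) ^ 2 /
        (x ^ ((1 : ℝ)/3) + (1 - x) ^ ((1 : ℝ)/3))) :
    (∀ x ∈ Set.Ioo (0 : ℝ) (1/2), f x < 1) ∧
    Filter.Tendsto f (nhdsWithin 0 (Set.Ioi 0)) (nhds 1) := by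
  constructor
  · intro x hx
    obtain ⟨hx0, hx2⟩ := hx
    have hx1 : (0:ℝ) < 1 - x := by linarith
    set a := x ^ ((1:ℝ)/3) with ha
    set b := (1 - x) ^ ((1:ℝ)/3) with hb
    have hapos : 0 < a := Real.rpow_pos_of_pos hx0 _
    have hbpos : 0 < b := Real.rpow_pos_of_pos hx1 _
    have ha3 : a ^ 3 = x := by
      rw [ha, ← Real.rpow_natCast (x ^ ((1:ℝ)/3)) 3, ← Real.rpow_mul hx0.le]
      norm_num
    have hb3 : b ^ 3 = 1 - x := by
      rw [hb, ← Real.rpow_natCast ((1-x) ^ ((1:ℝ)/3)) 3, ← Real.rpow_mul hx1.le]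
      norm_num
    have ha2 : x ^ ((2:ℝ)/3) = a ^ 2 := by
      rw [ha, ← Real.rpow_natCast (x ^ ((1:ℝ)/3)) 2, ← Real.rpow_mul hx0.le]
      norm_num
    have hb2 : (1 - x) ^ ((2:ℝ)/3) = b ^ 2 := by
      rw [hb, ← Real.rpow_natCast ((1-x) ^ ((1:ℝ)/3)) 2, ← Real.rpow_mul hx1.le]
      norm_num
    have habpos : 0 < a + b := by linarith
    rw [hf x, ha2, hb2, div_lt_one habpos]
    nlinarith [mul_pos (pow_pos habpos 2) (mul_pos hapos hbpos), ha3, hb3,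
      sq_nonneg (a - b), sq_nonneg (a + b)]
  · have hfeq : f = fun x => (x ^ ((2 : ℝ)/3) - (1 - x) ^ ((2 : ℝ)/3)) ^ 2 /
        (x ^ ((1 : ℝ)/3) + (1 - x) ^ ((1 : ℝ)/3)) := funext hf
    rw [hfeq]
    have csub : ContinuousAt (fun x : ℝ => 1 - x) 0 := by fun_prop
    have h10 : (fun x : ℝ => 1 - x) 0 = 1 := by norm_num
    have c1 : ContinuousAt (fun x : ℝ => x ^ ((2:ℝ)/3)) 0 :=
      Real.continuousAt_rpow_const 0 _ (Or.inr (by norm_num))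
    have c2 : ContinuousAt (fun x : ℝ => (1 - x) ^ ((2:ℝ)/3)) 0 := by
      have h : ContinuousAt (fun y : ℝ => y ^ ((2:ℝ)/3)) ((fun x : ℝ => 1 - x) 0) := by
        rw [h10]; exact Real.continuousAt_rpow_const 1 _ (Or.inl one_ne_zero)
      exact h.comp csub
    have c3 : ContinuousAt (fun x : ℝ => x ^ ((1:ℝ)/3)) 0 :=
      Real.continuousAt_rpow_const 0 _ (Or.inr (by norm_num))
    have c4 : ContinuousAt (fun x : ℝ => (1 - x) ^ ((1:ℝ)/3)) 0 := by
      have h : ContinuousAt (fun y : ℝ => y ^ ((1:ℝ)/3)) ((fun x : ℝ => 1 - x) 0) := by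
        rw [h10]; exact Real.continuousAt_rpow_const 1 _ (Or.inl one_ne_zero)
      exact h.comp csub
    have hden : ((0:ℝ) ^ ((1:ℝ)/3) + (1 - 0:ℝ) ^ ((1:ℝ)/3)) ≠ 0 := by
      norm_num [Real.zero_rpow, Real.one_rpow]
    have hc : ContinuousAt (fun x : ℝ => (x ^ ((2 : ℝ)/3) - (1 - x) ^ ((2 : ℝ)/3)) ^ 2 /
        (x ^ ((1 : ℝ)/3) + (1 - x) ^ ((1 : ℝ)/3))) 0 :=
      ContinuousAt.div ((c1.sub c2).pow 2) (c3.add c4) hden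
    have hval : (fun x : ℝ => (x ^ ((2 : ℝ)/3) - (1 - x) ^ ((2 : ℝ)/3)) ^ 2 /
        (x ^ ((1 : ℝ)/3) + (1 - x) ^ ((1 : ℝ)/3))) 0 = 1 := by
      norm_num [Real.zero_rpow, Real.one_rpow]
    have ht : Filter.Tendsto (fun x : ℝ => (x ^ ((2 : ℝ)/3) - (1 - x) ^ ((2 : ℝ)/3)) ^ 2 /
        (x ^ ((1 : ℝ)/3) + (1 - x) ^ ((1 : ℝ)/3))) (nhdsWithin 0 (Set.Ioi 0))
        (nhds ((fun x : ℝ => (x ^ ((2 : ℝ)/3) - (1 - x) ^ ((2 : ℝ)/3)) ^ 2 /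
        (x ^ ((1 : ℝ)/3) + (1 - x) ^ ((1 : ℝ)/3))) 0)) := hc.continuousWithinAt
    rw [hval] at ht
    exact ht
end
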